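/- Let k = r/n where r is a positive integer not divisible by n, and consider the Dunkl operators D_i = ∂_i − k Σ_{j≠i} (1 − s_{ij})/(x_i − x_j) of type A_{n−1} acting on translation-invariant polynomials. Then the functions f_i(x_1,...,x_n) = Res_∞ [(z−x_1)···(z−x_n)]^{r/n} dz/(z − x_i) are polynomials of degree r spanning a copy of the reflection representation of S_n, and they are singular vectors: D_j f_i = 0 for all i, j. -/

import Mathlib

noncomputable section
open MvPolynomial
open scoped Classical
set_option maxHeartbeats 1600000

/-- The quotient of `b` by `a` when `a ∣ b`, and `0` otherwise. -/
def divOr0 {n : ℕ} (a b : MvPolynomial (Fin n) ℂ) : MvPolynomial (Fin n) ℂ :=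
  if h : a ∣ b then h.choose else 0

/-- The type `A_{n-1}` Dunkl operator `D_j = ∂_j - k Σ_{l ≠ j} (1 - s_{jl})/(x_j - x_l)`
acting on polynomials. -/
def dunklA {n : ℕ} (k : ℂ) (j : Fin n) (f : MvPolynomial (Fin n) ℂ) :
    MvPolynomial (Fin n) ℂ :=
  pderiv j f - k • ∑ l ∈ Finset.univ.erase j,
    divOr0 (X j - X l) (f - rename (Equiv.swap j l) f)

/-- The expansion at `z = ∞` of `[(z-x_1)⋯(z-x_n)]^{r/n}/(z - x_i)` in the variable `w = 1/z`,
divided by `z^{r-1}`: the product of the binomial series `(1 - x_j w)^{r/n}` over all `j` with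
the geometric series `(1 - x_i w)^{-1} = Σ_k x_i^k w^k`. -/
def seriesFor (n r : ℕ) (i : Fin n) : PowerSeries (MvPolynomial (Fin n) ℂ) :=
  (∏ j : Fin n, PowerSeries.mk fun k =>
      C ((∏ t ∈ Finset.range k, ((r : ℂ) / n - t)) / k.factorial * (-1) ^ k) * (X j) ^ k)
    * PowerSeries.mk fun k => (X i) ^ k

/-- `f_i = Res_∞ [(z-x_1)⋯(z-x_n)]^{r/n} dz/(z-x_i)`: since
`[(z-x_1)⋯(z-x_n)]^{r/n}/(z-x_i) = z^{r-1} · seriesFor n r i` at infinity, the residue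
(minus the coefficient of `z^{-1}`) is minus the coefficient of `w^r`. -/
def jackSingular (n r : ℕ) (i : Fin n) : MvPolynomial (Fin n) ℂ :=
  - PowerSeries.coeff r (seriesFor n r i)

namespace JackAux

abbrev A (n : ℕ) := MvPolynomial (Fin n) ℂ

/-- coefficients of the binomial series `(1-xw)^{r/n}` -/
def cc (n r k : ℕ) : ℂ := (∏ t ∈ Finset.range k, ((r : ℂ) / n - t)) / k.factorial * (-1) ^ k

lemma cc_zero (n r : ℕ) : cc n r 0 = 1 := by simp [cc]

lemma cc_rec (n r k : ℕ) :
    ((k : ℂ) + 1) * cc n r (k + 1) = ((k : ℂ) - (r : ℂ) / n) * cc n r k := by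
  have h1 : ((k.factorial : ℂ)) ≠ 0 := Nat.cast_ne_zero.2 k.factorial_ne_zero
  have h3 : ((k : ℂ) + 1) ≠ 0 := Nat.cast_add_one_ne_zero k
  simp only [cc, Finset.prod_range_succ, Nat.factorial_succ]
  push_cast
  field_simp
  ring

def Bs (n r : ℕ) (j : Fin n) : PowerSeries (A n) :=
  PowerSeries.mk fun k => C (cc n r k) * X j ^ k

def Gs (n : ℕ) (i : Fin n) : PowerSeries (A n) :=
  PowerSeries.mk fun k => (X i : A n) ^ k

def Ps (n r : ℕ) : PowerSeries (A n) := ∏ j, Bs n r j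

lemma seriesFor_eq (n r : ℕ) (i : Fin n) : seriesFor n r i = Ps n r * Gs n i := rfl

/-- `1 - x_i w` -/
def ll (n : ℕ) (i : Fin n) : PowerSeries (A n) := 1 - PowerSeries.C (X i) * PowerSeries.X

def LL (n : ℕ) : PowerSeries (A n) := ∏ i, ll n i

def LLe (n : ℕ) (j : Fin n) : PowerSeries (A n) := ∏ i ∈ Finset.univ.erase j, ll n i

/-- constant (in `w` and in `x`) series -/
def Km (n : ℕ) (a : ℂ) : PowerSeries (A n) := PowerSeries.C (C a)

lemma coeff_ll_mul_zero (n : ℕ) (i : Fin n) (F : PowerSeries (A n)) :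
    PowerSeries.coeff 0 (ll n i * F) = PowerSeries.coeff 0 F := by
  simp [ll, sub_mul, PowerSeries.coeff_C_mul, mul_assoc,
    PowerSeries.coeff_zero_X_mul]

lemma coeff_ll_mul_succ (n : ℕ) (i : Fin n) (F : PowerSeries (A n)) (m : ℕ) :
    PowerSeries.coeff (m+1) (ll n i * F)
      = PowerSeries.coeff (m+1) F - X i * PowerSeries.coeff m F := by
  simp [ll, sub_mul, PowerSeries.coeff_C_mul, mul_assoc,
    PowerSeries.coeff_succ_X_mul]

lemma hG (n : ℕ) (i : Fin n) : ll n i * Gs n i = 1 := by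
  ext m
  cases m with
  | zero => simp [coeff_ll_mul_zero, Gs]
  | succ m => simp [coeff_ll_mul_succ, Gs, pow_succ, mul_comm]
variable {n : ℕ}

/-- coefficientwise partial derivative of a power series -/
def pd (j : Fin n) (F : PowerSeries (A n)) : PowerSeries (A n) :=
  PowerSeries.mk fun m => pderiv j (PowerSeries.coeff m F)

lemma coeff_pd (j : Fin n) (F : PowerSeries (A n)) (m : ℕ) :
    PowerSeries.coeff m (pd j F) = pderiv j (PowerSeries.coeff m F) := by
  simp [pd]

lemma pd_mul (j : Fin n) (F G : PowerSeries (A n)) :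
    pd j (F * G) = pd j F * G + F * pd j G := by
  ext m
  simp only [coeff_pd, map_add, PowerSeries.coeff_mul, map_sum, pderiv_mul,
    ← Finset.sum_add_distrib, coeff_pd]

lemma pderiv_X_pow_of_ne {j m : Fin n} (h : m ≠ j) (k : ℕ) :
    pderiv j ((X m : A n) ^ k) = 0 := by
  induction k with
  | zero => simp
  | succ k ih => rw [pow_succ, pderiv_mul, ih, pderiv_X_of_ne h]; simp

lemma X_mul_pderiv_X_pow (j : Fin n) (k : ℕ) :
    (X j : A n) * pderiv j ((X j : A n) ^ k) = (k : A n) * X j ^ k := by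
  induction k with
  | zero => simp
  | succ k ih =>
    rw [pow_succ, pderiv_mul, pderiv_X_self]
    push_cast
    linear_combination (X j : A n) * ih

lemma pderiv_X_pow_succ (j : Fin n) (k : ℕ) :
    pderiv j ((X j : A n) ^ (k+1)) = ((k : A n) + 1) * X j ^ k := by
  rw [pow_succ, pderiv_mul, pderiv_X_self]
  linear_combination X_mul_pderiv_X_pow j k

variable {n : ℕ}

lemma pd_Bs_of_ne {j m : Fin n} (r : ℕ) (h : m ≠ j) : pd j (Bs n r m) = 0 := by
  ext k
  simp [coeff_pd, Bs, pderiv_C_mul, pderiv_X_pow_of_ne h]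

lemma pd_Gs_of_ne {j i : Fin n} (h : i ≠ j) : pd j (Gs n i) = 0 := by
  ext k
  simp [coeff_pd, Gs, pderiv_X_pow_of_ne h]

lemma C_rec (r m : ℕ) :
    (C ((m:ℂ)+1) * C (cc n r (m+1)) : A n)
      = (C (m:ℂ) - C ((r:ℂ)/n)) * C (cc n r m) := by
  rw [← C_mul, ← C_sub, ← C_mul]
  exact congrArg C (cc_rec n r m)

lemma natCast_eq_C (m : ℕ) : ((m : ℕ) : A n) = C ((m : ℕ) : ℂ) := (map_natCast C m).symm

lemma ll_mul_pd_Bs (r : ℕ) (j : Fin n) :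
    ll n j * pd j (Bs n r j) = Km n (-((r:ℂ)/n)) * (PowerSeries.X * Bs n r j) := by
  refine PowerSeries.ext fun m => ?_
  cases m with
  | zero =>
    simp [coeff_ll_mul_zero, coeff_pd, Bs, Km, PowerSeries.coeff_C_mul,
      PowerSeries.coeff_zero_X_mul]
  | succ m =>
    rw [coeff_ll_mul_succ]
    simp only [Km, PowerSeries.coeff_C_mul, PowerSeries.coeff_succ_X_mul, coeff_pd, Bs,
      PowerSeries.coeff_mk, pderiv_C_mul, pderiv_X_pow_succ]
    rw [mul_left_comm (X j), X_mul_pderiv_X_pow, natCast_eq_C]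
    linear_combination (norm := (push_cast; simp only [map_neg, map_add, map_one, map_zero]; ring1)) (X j ^ m : A n) * C_rec r m

lemma ll_mul_pd_Gs (j : Fin n) :
    ll n j * pd j (Gs n j) = PowerSeries.X * Gs n j := by
  refine PowerSeries.ext fun m => ?_
  cases m with
  | zero =>
    simp [coeff_ll_mul_zero, coeff_pd, Gs, PowerSeries.coeff_zero_X_mul]
  | succ m =>
    rw [coeff_ll_mul_succ]
    simp only [coeff_pd, Gs, PowerSeries.coeff_mk, PowerSeries.coeff_succ_X_mul,
      pderiv_X_pow_succ, X_mul_pderiv_X_pow]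
    ring

lemma coeff_dF (f : PowerSeries (A n)) (m : ℕ) :
    PowerSeries.coeff m (PowerSeries.derivativeFun f) = PowerSeries.coeff (m+1) f * (m+1) :=
  PowerSeries.coeff_derivative f m

open PowerSeries in
lemma ll_mul_dw_Bs (r : ℕ) (j : Fin n) :
    ll n j * derivativeFun (Bs n r j)
      = Km n (-((r:ℂ)/n)) * (PowerSeries.C (X j) * Bs n r j) := by
  refine PowerSeries.ext fun m => ?_
  cases m with
  | zero =>
    simp only [coeff_ll_mul_zero, coeff_dF, Bs, PowerSeries.coeff_mk, Km,
      PowerSeries.coeff_C_mul, pow_one, pow_zero, mul_one, Nat.cast_zero, zero_add,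
      natCast_eq_C]
    linear_combination (norm := (push_cast; simp only [map_neg, map_add, map_one, map_zero]; ring1)) (X j : A n) * C_rec r 0
  | succ m =>
    rw [coeff_ll_mul_succ]
    simp only [coeff_dF, Bs, PowerSeries.coeff_mk, Km, PowerSeries.coeff_C_mul,
      natCast_eq_C]
    push_cast
    linear_combination (norm := (push_cast; simp only [map_neg, map_add, map_one, map_zero]; ring1)) (X j ^ (m+2) : A n) * C_rec r (m+1)

open PowerSeries in
lemma ll_mul_dw_Gs (j : Fin n) :
    ll n j * derivativeFun (Gs n j) = PowerSeries.C (X j) * Gs n j := by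
  refine PowerSeries.ext fun m => ?_
  cases m with
  | zero =>
    simp [coeff_dF, coeff_ll_mul_zero, Gs, PowerSeries.coeff_C_mul]
  | succ m =>
    rw [coeff_ll_mul_succ]
    simp only [coeff_dF, Gs, PowerSeries.coeff_mk, PowerSeries.coeff_C_mul]
    push_cast
    rw [pow_succ (X j) (m+1)]
    ring


open PowerSeries in
lemma dw_mul (F G : PowerSeries (A n)) :
    derivativeFun (F * G) = derivativeFun F * G + F * derivativeFun G := by
  rw [derivativeFun_mul, smul_eq_mul, smul_eq_mul]; ring

lemma prod_rule {ι : Type*} [DecidableEq ι] {D : PowerSeries (A n) → PowerSeries (A n)}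
    (hD : ∀ F G, D (F * G) = D F * G + F * D G) (s : Finset ι) (g : ι → PowerSeries (A n)) :
    D (∏ m ∈ s, g m) = ∑ m ∈ s, (∏ l ∈ s.erase m, g l) * D (g m) := by
  have h1 : D 1 = 0 := by
    have := hD 1 1
    simp only [mul_one, one_mul] at this
    exact left_eq_add.mp this
  induction s using Finset.induction_on with
  | empty => simpa using h1
  | @insert a s ha ih =>
    rw [Finset.prod_insert ha, hD, ih, Finset.sum_insert ha, Finset.erase_insert ha,
      Finset.mul_sum]
    refine congrArg₂ (· + ·) ?_ ?_
    · ring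
    · refine Finset.sum_congr rfl fun m hm => ?_
      have ham : a ≠ m := fun h => ha (h ▸ hm)
      rw [Finset.erase_insert_of_ne ham,
        Finset.prod_insert (fun h => ha (Finset.mem_of_mem_erase h))]
      ring

lemma pd_one (j : Fin n) : pd j (1 : PowerSeries (A n)) = 0 := by
  ext m
  simp only [coeff_pd, PowerSeries.coeff_one, map_zero]
  split <;> simp

lemma pd_prod_erase (r : ℕ) (j : Fin n) :
    pd j (∏ m ∈ Finset.univ.erase j, Bs n r m) = 0 := by
  refine Finset.prod_induction _ (fun F => pd j F = 0) ?_ (pd_one j) ?_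
  · intro a b ha hb; rw [pd_mul, ha, hb]; simp
  · intro m hm; exact pd_Bs_of_ne r (Finset.ne_of_mem_erase hm)

lemma pd_Ps (r : ℕ) (j : Fin n) :
    pd j (Ps n r) = pd j (Bs n r j) * ∏ m ∈ Finset.univ.erase j, Bs n r m := by
  rw [Ps, ← Finset.mul_prod_erase _ _ (Finset.mem_univ j), pd_mul, pd_prod_erase]
  ring

lemma LL_eq (m : Fin n) : LL n = ll n m * LLe n m :=
  (Finset.mul_prod_erase _ _ (Finset.mem_univ m)).symm

lemma Bs_mul_prod_erase (r : ℕ) (m : Fin n) :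
    Bs n r m * ∏ l ∈ Finset.univ.erase m, Bs n r l = Ps n r :=
  Finset.mul_prod_erase _ _ (Finset.mem_univ m)

open PowerSeries in
lemma dw_Ps (r : ℕ) :
    LL n * derivativeFun (Ps n r)
      = Km n (-((r:ℂ)/n)) * ∑ m : Fin n, PowerSeries.C (R := A n) (X m) * (Ps n r * LLe n m) := by
  rw [Ps, prod_rule dw_mul Finset.univ (Bs n r), Finset.mul_sum, Finset.mul_sum]
  refine Finset.sum_congr rfl fun m _ => ?_
  have h1 := ll_mul_dw_Bs r m
  have h2 := Bs_mul_prod_erase r m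
  rw [LL_eq m]
  have hPs : Ps n r = ∏ j : Fin n, Bs n r j := rfl
  linear_combination (LLe n m * ∏ l ∈ Finset.univ.erase m, Bs n r l) * h1
    + (Km n (-((r:ℂ)/n)) * PowerSeries.C (R := A n) (X m) * LLe n m) * h2
    + (LLe n m * Km n (-((r:ℂ)/n)) * PowerSeries.C (R := A n) (X m)) * hPs

lemma constCoeff_ll (i : Fin n) : PowerSeries.constantCoeff (ll n i) = 1 := by
  simp [ll]

lemma ne_zero_of_const_one {F : PowerSeries (A n)} (h : PowerSeries.constantCoeff F = 1) :
    F ≠ 0 := by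
  intro h0
  rw [h0, map_zero] at h
  exact one_ne_zero h.symm

lemma LL_ne_zero : LL n ≠ 0 := by
  refine ne_zero_of_const_one ?_
  rw [LL, map_prod]
  simp [constCoeff_ll]

lemma ll_mul_LL_ne_zero (j : Fin n) : ll n j * LL n ≠ 0 := by
  refine ne_zero_of_const_one ?_
  rw [map_mul, constCoeff_ll]
  rw [LL, map_prod]
  simp [constCoeff_ll]


lemma ll_ne_zero (j : Fin n) : ll n j ≠ 0 := ne_zero_of_const_one (constCoeff_ll j)

lemma Km_neg (a : ℂ) : Km n (-a) = - Km n a := by simp [Km, map_neg]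

def SX (n r : ℕ) : PowerSeries (A n) :=
  ∑ m : Fin n, PowerSeries.C (R := A n) (X m) * (Ps n r * LLe n m)

lemma dw_Ps' (r : ℕ) :
    LL n * PowerSeries.derivativeFun (Ps n r) = -(Km n ((r:ℂ)/n)) * SX n r := by
  rw [SX, ← Km_neg]; exact dw_Ps r

lemma xL (m : Fin n) :
    PowerSeries.C (R := A n) (X m) * PowerSeries.X * LLe n m = LLe n m - LL n := by
  rw [LL_eq m]; unfold ll; ring

lemma X_mul_SX (r : ℕ) :
    PowerSeries.X * SX n r
      = (∑ m : Fin n, Ps n r * LLe n m) - (n : PowerSeries (A n)) * (Ps n r * LL n) := by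
  rw [SX, Finset.mul_sum]
  have : ∀ m : Fin n, PowerSeries.X * (PowerSeries.C (R := A n) (X m) * (Ps n r * LLe n m))
      = Ps n r * LLe n m - Ps n r * LL n := by
    intro m
    linear_combination (Ps n r) * xL m
  rw [Finset.sum_congr rfl fun m _ => this m, Finset.sum_sub_distrib, Finset.sum_const,
    Finset.card_univ, Fintype.card_fin, nsmul_eq_mul]

lemma Km_natCast (m : ℕ) : Km n ((m:ℕ) : ℂ) = ((m : ℕ) : PowerSeries (A n)) :=
  map_natCast ((PowerSeries.C (R := A n)).comp (C : ℂ →+* A n)) m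

lemma Km_mul (a b : ℂ) : Km n (a * b) = Km n a * Km n b := by simp [Km, map_mul]

lemma Km_add (a b : ℂ) : Km n (a + b) = Km n a + Km n b := by simp [Km, map_add]

lemma Km_one : Km n 1 = (1 : PowerSeries (A n)) := by simp [Km]

lemma A1 (r : ℕ) (j : Fin n) :
    (ll n j * LL n) * pd j (seriesFor n r j)
      = PowerSeries.X * (Ps n r * LLe n j)
        - Km n ((r:ℂ)/n) * (PowerSeries.X * (Ps n r * LLe n j)) := by
  rw [seriesFor_eq, pd_mul, pd_Ps, LL_eq j]
  have h1 := ll_mul_pd_Bs (n := n) r j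
  rw [Km_neg, neg_mul] at h1
  have h2 := Bs_mul_prod_erase (n := n) r j
  have h3 := hG n j
  have h4 := ll_mul_pd_Gs (n := n) j
  linear_combination
    (ll n j * LLe n j * (∏ m ∈ Finset.univ.erase j, Bs n r m) * Gs n j) * h1
    + (ll n j * LLe n j * Ps n r) * h4
    + (-(Km n ((r:ℂ)/n)) * PowerSeries.X * Gs n j * ll n j * LLe n j) * h2
    + (-(Km n ((r:ℂ)/n)) * PowerSeries.X * (Ps n r * LLe n j)
        + PowerSeries.X * (Ps n r * LLe n j)) * h3

lemma A2 (r : ℕ) (j l : Fin n) :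
    (ll n j * LL n) * (PowerSeries.X * (Ps n r * (Gs n j * Gs n l)))
      = PowerSeries.X * (Ps n r * LLe n l) := by
  rw [LL_eq l]
  linear_combination (ll n j * LLe n l * PowerSeries.X * Ps n r * Gs n j) * hG n l
    + (LLe n l * PowerSeries.X * Ps n r) * hG n j

lemma A3 (r : ℕ) (j : Fin n) :
    (ll n j * LL n) * (PowerSeries.X ^ 2 * PowerSeries.derivativeFun (seriesFor n r j))
      = -(Km n ((r:ℂ)/n)) * (PowerSeries.X ^ 2 * SX n r)
        + PowerSeries.X ^ 2 * (PowerSeries.C (R := A n) (X j) * (Ps n r * LLe n j)) := by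
  rw [seriesFor_eq, dw_mul]
  have hd := dw_Ps' (n := n) r
  have hg := ll_mul_dw_Gs (n := n) j
  have h3 := hG n j
  have hL : LL n = ll n j * LLe n j := LL_eq j
  linear_combination
    (ll n j * Gs n j * PowerSeries.X ^ 2) * hd
    + (ll n j * PowerSeries.X ^ 2 * Ps n r * PowerSeries.derivativeFun (Gs n j)) * hL
    + (ll n j * LLe n j * PowerSeries.X ^ 2 * Ps n r) * hg
    + (LLe n j * PowerSeries.X ^ 2 * Ps n r * PowerSeries.C (R := A n) (X j)
        - Km n ((r:ℂ)/n) * PowerSeries.X ^ 2 * SX n r) * h3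

lemma A5 (r : ℕ) (j : Fin n) (a : ℂ) :
    (ll n j * LL n) * (Km n a * (PowerSeries.X * seriesFor n r j))
      = Km n a * (PowerSeries.X * (Ps n r * LL n)) := by
  rw [seriesFor_eq]
  have hL : LL n = ll n j * LLe n j := LL_eq j
  linear_combination
    (ll n j * Km n a * PowerSeries.X * Ps n r * Gs n j - Km n a * PowerSeries.X * Ps n r) * hL
    + (ll n j * LLe n j * Km n a * PowerSeries.X * Ps n r) * hG n j

lemma Fj (hn0 : (n:ℂ) ≠ 0) (r : ℕ) (j : Fin n) :
    pd j (seriesFor n r j)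
      - Km n ((r:ℂ)/n)
        * ∑ l ∈ Finset.univ.erase j, (PowerSeries.X * (Ps n r * (Gs n j * Gs n l)))
    = Km n (1 - (r:ℂ)) * (PowerSeries.X * seriesFor n r j)
      + PowerSeries.X ^ 2 * PowerSeries.derivativeFun (seriesFor n r j) := by
  apply mul_left_cancel₀ (ll_mul_LL_ne_zero j)
  have hS1 : (ll n j * LL n)
        * ∑ l ∈ Finset.univ.erase j, (PowerSeries.X * (Ps n r * (Gs n j * Gs n l)))
      = ∑ l ∈ Finset.univ.erase j, (PowerSeries.X * (Ps n r * LLe n l)) := by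
    rw [Finset.mul_sum]; exact Finset.sum_congr rfl fun l _ => A2 r j l
  have hS2 : ∑ l ∈ Finset.univ.erase j, (PowerSeries.X * (Ps n r * LLe n l))
      = (PowerSeries.X * ∑ m : Fin n, Ps n r * LLe n m)
          - PowerSeries.X * (Ps n r * LLe n j) := by
    rw [Finset.mul_sum]
    exact eq_sub_of_add_eq (Finset.sum_erase_add _ _ (Finset.mem_univ j))
  have hX := X_mul_SX (n := n) r
  have hxLj := xL (n := n) j
  have hK : Km n (1 - (r:ℂ)) + Km n ((r:ℂ)/n) * ((n:ℕ) : PowerSeries (A n)) = 1 := by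
    rw [← Km_natCast, ← Km_mul, div_mul_cancel₀ _ hn0, ← Km_add, sub_add_cancel, Km_one]
  rw [mul_sub, A1, mul_add, A5, A3]
  linear_combination (-(Km n ((r:ℂ)/n))) * hS1 + (-(Km n ((r:ℂ)/n))) * hS2
    + (Km n ((r:ℂ)/n) * PowerSeries.X) * hX + (-(PowerSeries.X * Ps n r)) * hxLj
    + (-(PowerSeries.X * (Ps n r * LL n))) * hK



lemma pd_S_ne (r : ℕ) {i j : Fin n} (hij : i ≠ j) :
    pd j (seriesFor n r i)
      = -(Km n ((r:ℂ)/n)) * (PowerSeries.X * (Ps n r * (Gs n i * Gs n j))) := by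
  apply mul_left_cancel₀ (ll_ne_zero j)
  rw [seriesFor_eq, pd_mul, pd_Gs_of_ne hij, pd_Ps, mul_zero, add_zero]
  have h1 := ll_mul_pd_Bs (n := n) r j
  rw [Km_neg, neg_mul] at h1
  have h2 := Bs_mul_prod_erase (n := n) r j
  have h3 := hG n j
  linear_combination
    ((∏ m ∈ Finset.univ.erase j, Bs n r m) * Gs n i) * h1
    + (-(Km n ((r:ℂ)/n)) * PowerSeries.X * Gs n i) * h2
    + (Km n ((r:ℂ)/n) * PowerSeries.X * Ps n r * Gs n i) * h3

lemma Gs_sub (i j : Fin n) :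
    Gs n i - Gs n j
      = (PowerSeries.C (R := A n) (X i) - PowerSeries.C (R := A n) (X j))
          * (PowerSeries.X * (Gs n i * Gs n j)) := by
  have h : Gs n i - Gs n j = (ll n j * Gs n j) * Gs n i - (ll n i * Gs n i) * Gs n j := by
    rw [hG n i, hG n j]; ring
  rw [h]; unfold ll; ring

lemma S_sub (r : ℕ) (i j : Fin n) :
    seriesFor n r i - seriesFor n r j
      = PowerSeries.C (R := A n) (X i - X j)
          * (PowerSeries.X * (Ps n r * (Gs n i * Gs n j))) := by
  rw [seriesFor_eq, seriesFor_eq, map_sub]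
  linear_combination (Ps n r) * Gs_sub (n := n) i j

/-- the polynomial `[w^r] w P G_i G_j` -/
def gPol (n r : ℕ) (i j : Fin n) : A n :=
  PowerSeries.coeff (R := A n) r (PowerSeries.X * (Ps n r * (Gs n i * Gs n j)))

lemma jack_sub (r : ℕ) (i j : Fin n) :
    jackSingular n r i - jackSingular n r j = (X j - X i) * gPol n r i j := by
  have h : PowerSeries.coeff (R := A n) r (seriesFor n r i)
        - PowerSeries.coeff (R := A n) r (seriesFor n r j) = (X i - X j) * gPol n r i j := by
    rw [← map_sub (PowerSeries.coeff (R := A n) r), S_sub r i j, PowerSeries.coeff_C_mul, gPol]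
  simp only [jackSingular]
  linear_combination -h

lemma divOr0_eq {a b q : A n} (ha : a ≠ 0) (h : b = a * q) : divOr0 a b = q := by
  have hd : a ∣ b := ⟨q, h⟩
  rw [divOr0, dif_pos hd]
  exact (mul_left_cancel₀ ha (h.symm.trans hd.choose_spec)).symm

lemma X_sub_X_ne_zero {i j : Fin n} (h : i ≠ j) : (X i - X j : A n) ≠ 0 := by
  intro h0
  exact h (MvPolynomial.X_injective (sub_eq_zero.mp h0))

lemma coeff_Km_mul (a : ℂ) (F : PowerSeries (A n)) (m : ℕ) :
    PowerSeries.coeff (R := A n) m (Km n a * F) = C a * PowerSeries.coeff (R := A n) m F :=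
  PowerSeries.coeff_C_mul m F (C a)

lemma pderiv_jack (r : ℕ) (i j : Fin n) :
    pderiv j (jackSingular n r i)
      = - PowerSeries.coeff (R := A n) r (pd j (seriesFor n r i)) := by
  simp [jackSingular, coeff_pd]

lemma map_Bs (r : ℕ) (σ : Equiv.Perm (Fin n)) (j : Fin n) :
    PowerSeries.map (rename ⇑σ).toRingHom (Bs n r j) = Bs n r (σ j) := by
  ext k
  simp [Bs, PowerSeries.coeff_map, map_mul, map_pow, rename_C, rename_X]

lemma map_Gs (σ : Equiv.Perm (Fin n)) (i : Fin n) :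
    PowerSeries.map (rename ⇑σ).toRingHom (Gs n i) = Gs n (σ i) := by
  ext k
  simp [Gs, PowerSeries.coeff_map, map_pow, rename_X]

lemma map_Ps (r : ℕ) (σ : Equiv.Perm (Fin n)) :
    PowerSeries.map (rename ⇑σ).toRingHom (Ps n r) = Ps n r := by
  have h1 : PowerSeries.map (rename ⇑σ).toRingHom (Ps n r) = ∏ j, Bs n r (σ j) := by
    rw [Ps, map_prod]
    exact Finset.prod_congr rfl fun j _ => map_Bs r σ j
  rw [h1, Ps]
  exact Equiv.prod_comp σ (Bs n r)

lemma rename_jack (r : ℕ) (σ : Equiv.Perm (Fin n)) (i : Fin n) :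
    rename ⇑σ (jackSingular n r i) = jackSingular n r (σ i) := by
  simp only [jackSingular, map_neg]
  congr 1
  have h : (rename ⇑σ) (PowerSeries.coeff (R := A n) r (seriesFor n r i))
      = PowerSeries.coeff (R := A n) r
          (PowerSeries.map (rename ⇑σ).toRingHom (seriesFor n r i)) := by
    rw [PowerSeries.coeff_map]; rfl
  rw [h, seriesFor_eq, seriesFor_eq, map_mul, map_Ps, map_Gs]

lemma jack_eq_neg_coeff (r : ℕ) (i : Fin n) :
    jackSingular n r i = - PowerSeries.coeff (R := A n) r (seriesFor n r i) := rfl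

theorem dunkl_zero (hn0 : (n:ℂ) ≠ 0) {r : ℕ} (hr : 0 < r) (i j : Fin n) :
    dunklA ((r:ℂ)/n) j (jackSingular n r i) = 0 := by
  rw [dunklA]
  by_cases hij : i = j
  · -- diagonal case
    subst hij
    have hsum : ∑ l ∈ Finset.univ.erase i,
        divOr0 (X i - X l) (jackSingular n r i - rename (Equiv.swap i l) (jackSingular n r i))
        = - ∑ l ∈ Finset.univ.erase i, gPol n r i l := by
      rw [← Finset.sum_neg_distrib]
      refine Finset.sum_congr rfl fun l hl => ?_
      have hli : l ≠ i := Finset.ne_of_mem_erase hl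
      rw [rename_jack r (Equiv.swap i l) i, Equiv.swap_apply_left]
      refine divOr0_eq (X_sub_X_ne_zero hli.symm) ?_
      rw [jack_sub r i l]
      ring
    rw [hsum]
    have hFj := Fj hn0 r i
    have hc := congrArg (PowerSeries.coeff (R := A n) r) hFj
    rw [map_sub, map_add] at hc
    have hcsum : PowerSeries.coeff (R := A n) r (Km n ((r:ℂ)/n)
          * ∑ l ∈ Finset.univ.erase i, (PowerSeries.X * (Ps n r * (Gs n i * Gs n l))))
        = C ((r:ℂ)/n) * ∑ l ∈ Finset.univ.erase i, gPol n r i l := by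
      rw [coeff_Km_mul, map_sum]
      rfl
    rw [hcsum] at hc
    have hrhs : PowerSeries.coeff (R := A n) r (Km n (1 - (r:ℂ))
            * (PowerSeries.X * seriesFor n r i))
          + PowerSeries.coeff (R := A n) r
            (PowerSeries.X ^ 2 * PowerSeries.derivativeFun (seriesFor n r i)) = 0 := by
      rcases Nat.lt_or_ge r 2 with h2 | h2
      · have hr1 : r = 1 := by omega
        subst hr1
        rw [coeff_Km_mul]
        have e1 : PowerSeries.coeff (R := A n) 1 (PowerSeries.X * seriesFor n 1 i)
            = PowerSeries.coeff (R := A n) 0 (seriesFor n 1 i) :=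
          PowerSeries.coeff_succ_X_mul 0 _
        have e2 : PowerSeries.coeff (R := A n) 1
            (PowerSeries.X ^ 2 * PowerSeries.derivativeFun (seriesFor n 1 i)) = 0 := by
          rw [PowerSeries.coeff_X_pow_mul'
            (PowerSeries.derivativeFun (seriesFor n 1 i)) 2 1]
          simp
        rw [e1, e2]
        norm_num
      · have hr1 : r - 1 + 1 = r := Nat.succ_pred_eq_of_pos hr
        have hr2 : r - 2 + 2 = r := by omega
        have e1 : PowerSeries.coeff (R := A n) r (PowerSeries.X * seriesFor n r i)
            = PowerSeries.coeff (R := A n) (r-1) (seriesFor n r i) := by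
          set F := seriesFor n r i with hF
          conv_lhs => rw [← hr1]
          exact PowerSeries.coeff_succ_X_mul (R := A n) (r-1) F
        have e2 : PowerSeries.coeff (R := A n) r
            (PowerSeries.X ^ 2 * PowerSeries.derivativeFun (seriesFor n r i))
            = PowerSeries.coeff (R := A n) (r-1) (seriesFor n r i) * (((r - 1 : ℕ)) : A n) := by
          set F := seriesFor n r i with hF
          conv_lhs => rw [← hr2]
          rw [PowerSeries.coeff_X_pow_mul, coeff_dF,
            show r - 2 + 1 = r - 1 from by omega]
          push_cast [Nat.cast_sub (by omega : 2 ≤ r), Nat.cast_sub (by omega : 1 ≤ r)]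
          ring
        rw [coeff_Km_mul, e1, e2]
        have hCr : (C ((r:ℕ) : ℂ) : A n) = ((r:ℕ) : A n) := map_natCast (C : ℂ →+* A n) r
        rw [map_sub, map_one, hCr, Nat.cast_sub (by omega : 1 ≤ r), Nat.cast_one]
        ring
    rw [pderiv_jack, MvPolynomial.smul_eq_C_mul]
    linear_combination -hc - hrhs
  · -- off-diagonal case
    have hji : j ≠ i := fun h => hij h.symm
    have hmem : i ∈ Finset.univ.erase j := Finset.mem_erase.mpr ⟨hij, Finset.mem_univ i⟩
    have hsum : ∑ l ∈ Finset.univ.erase j,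
        divOr0 (X j - X l) (jackSingular n r i - rename (Equiv.swap j l) (jackSingular n r i))
        = gPol n r i j := by
      rw [Finset.sum_eq_single_of_mem i hmem]
      · rw [rename_jack r (Equiv.swap j i) i, Equiv.swap_apply_right]
        exact divOr0_eq (X_sub_X_ne_zero hji) (jack_sub r i j)
      · intro l hl hli
        have hlj : l ≠ j := Finset.ne_of_mem_erase hl
        rw [rename_jack r (Equiv.swap j l) i,
          Equiv.swap_apply_of_ne_of_ne hij (Ne.symm hli), sub_self]
        exact divOr0_eq (X_sub_X_ne_zero (Ne.symm hlj)) (mul_zero _).symm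
    rw [hsum, pderiv_jack, pd_S_ne r hij, neg_mul, map_neg, neg_neg, coeff_Km_mul,
      MvPolynomial.smul_eq_C_mul,
      show PowerSeries.coeff (R := A n) r (PowerSeries.X * (Ps n r * (Gs n i * Gs n j)))
        = gPol n r i j from rfl]
    ring


/-! ### Homogeneity -/

def HomogSeries (F : PowerSeries (A n)) : Prop :=
  ∀ m, (PowerSeries.coeff (R := A n) m F).IsHomogeneous m

lemma HomogSeries.mul {F G : PowerSeries (A n)} (hF : HomogSeries F) (hG : HomogSeries G) :
    HomogSeries (F * G) := by
  intro m
  rw [PowerSeries.coeff_mul]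
  refine MvPolynomial.IsHomogeneous.sum _ _ _ fun p hp => ?_
  have := (hF p.1).mul (hG p.2)
  rwa [Finset.HasAntidiagonal.mem_antidiagonal.mp hp] at this

lemma HomogSeries.one : HomogSeries (1 : PowerSeries (A n)) := by
  intro m
  rw [PowerSeries.coeff_one]
  split
  · subst ‹m = 0›; exact isHomogeneous_one _ _
  · exact isHomogeneous_zero _ _ _

lemma homog_Bs (r : ℕ) (j : Fin n) : HomogSeries (Bs n r j) := by
  intro m
  rw [Bs, PowerSeries.coeff_mk]
  simpa using (isHomogeneous_C (Fin n) (cc n r m)).mul ((isHomogeneous_X ℂ j).pow m)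

lemma homog_Gs (i : Fin n) : HomogSeries (Gs n i) := by
  intro m
  rw [Gs, PowerSeries.coeff_mk]
  simpa using (isHomogeneous_X ℂ i).pow m

lemma homog_S (r : ℕ) (i : Fin n) : HomogSeries (seriesFor n r i) := by
  rw [seriesFor_eq]
  refine HomogSeries.mul ?_ (homog_Gs i)
  rw [Ps]
  refine Finset.prod_induction _ HomogSeries (fun a b ha hb => ha.mul hb)
    HomogSeries.one fun j _ => homog_Bs r j

lemma jack_homog (r : ℕ) (i : Fin n) : (jackSingular n r i).IsHomogeneous r :=
  (homog_S r i r).neg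

/-! ### Sum is zero -/

lemma LL_mul_Gs (i : Fin n) : LL n * Gs n i = LLe n i := by
  rw [LL_eq i]
  linear_combination (LLe n i) * hG n i

lemma sum_S (r : ℕ) (hn0 : (n:ℂ) ≠ 0) (hr0 : (r:ℂ) ≠ 0) :
    ∑ i, seriesFor n r i
      = ((n:ℕ) : PowerSeries (A n)) * Ps n r
        - Km n ((n:ℂ)/r) * (PowerSeries.X * PowerSeries.derivativeFun (Ps n r)) := by
  apply mul_left_cancel₀ (LL_ne_zero (n := n))
  rw [Finset.mul_sum]
  have h1 : ∀ i : Fin n, LL n * seriesFor n r i = Ps n r * LLe n i := fun i => by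
    rw [seriesFor_eq]; linear_combination (Ps n r) * LL_mul_Gs i
  rw [Finset.sum_congr rfl fun i _ => h1 i]
  have hd := dw_Ps' (n := n) r
  have hXS := X_mul_SX (n := n) r
  have hKm : Km n ((n:ℂ)/r) * Km n ((r:ℂ)/n) = 1 := by
    rw [← Km_mul, div_mul_div_comm, mul_comm (n:ℂ) (r:ℂ), div_self (by
      exact mul_ne_zero hr0 hn0), Km_one]
  linear_combination (Km n ((n:ℂ)/r) * PowerSeries.X) * hd
    + (-(PowerSeries.X * SX n r)) * hKm + (-1 : PowerSeries (A n)) * hXS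

lemma sum_jack (r : ℕ) (hn0 : (n:ℂ) ≠ 0) (hr : 0 < r) :
    ∑ i, jackSingular n r i = 0 := by
  have hr0 : (r:ℂ) ≠ 0 := Nat.cast_ne_zero.mpr (Nat.pos_iff_ne_zero.mp hr)
  have key := congrArg (PowerSeries.coeff (R := A n) r) (sum_S r hn0 hr0)
  rw [map_sum, map_sub] at key
  have h1 : ∑ i, PowerSeries.coeff (R := A n) r (seriesFor n r i)
      = - ∑ i, jackSingular n r i := by
    simp [jackSingular]
  have hKn : ((n:ℕ) : PowerSeries (A n)) = Km n ((n:ℕ):ℂ) := (Km_natCast n).symm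
  rw [h1, hKn, coeff_Km_mul, coeff_Km_mul] at key
  -- compute the X * derivative coefficient
  have hr1 : r - 1 + 1 = r := Nat.succ_pred_eq_of_pos hr
  have e1 : PowerSeries.coeff (R := A n) r (PowerSeries.X * PowerSeries.derivativeFun (Ps n r))
      = PowerSeries.coeff (R := A n) r (Ps n r) * (((r - 1 : ℕ) : A n) + 1) := by
    set F := Ps n r with hF
    conv_lhs => rw [← hr1]
    rw [PowerSeries.coeff_succ_X_mul, coeff_dF, hr1]
  rw [e1] at key
  have hcast : (((r - 1 : ℕ) : A n) + 1) = C ((r:ℕ) : ℂ) := by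
    rw [Nat.cast_sub (by omega : 1 ≤ r), map_natCast (C : ℂ →+* A n)]
    push_cast
    ring
  rw [hcast] at key
  have hC : C ((n:ℂ)/r) * (PowerSeries.coeff (R := A n) r (Ps n r) * C ((r:ℕ):ℂ))
      = C (((n:ℕ):ℂ)) * PowerSeries.coeff (R := A n) r (Ps n r) := by
    rw [mul_comm (PowerSeries.coeff (R := A n) r (Ps n r)) _, ← mul_assoc, ← C_mul,
      div_mul_cancel₀ _ hr0]
  rw [hC] at key
  have h0 : - ∑ i, jackSingular n r i = 0 := by rw [key]; ring
  exact neg_eq_zero.mp h0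

/-! ### Evaluation at the indicator point -/

/-- indicator assignment -/
def ind (i : Fin n) : Fin n → ℂ := fun j => if j = i then 1 else 0

lemma map_eval_Bs_ne (r : ℕ) {i j : Fin n} (h : j ≠ i) :
    PowerSeries.map (eval (ind i) : A n →+* ℂ) (Bs n r j) = 1 := by
  ext k
  rw [PowerSeries.coeff_map, PowerSeries.coeff_one, Bs, PowerSeries.coeff_mk]
  cases k with
  | zero => simp [cc_zero]
  | succ k => simp [ind, if_neg h, zero_pow]

lemma map_eval_Bs_self (r : ℕ) (i : Fin n) :
    PowerSeries.map (eval (ind i) : A n →+* ℂ) (Bs n r i)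
      = PowerSeries.mk fun k => cc n r k := by
  ext k
  rw [PowerSeries.coeff_map, Bs, PowerSeries.coeff_mk, PowerSeries.coeff_mk]
  simp [ind]

lemma map_eval_Gs_self (r : ℕ) (i : Fin n) :
    PowerSeries.map (eval (ind i) : A n →+* ℂ) (Gs n i)
      = PowerSeries.mk fun _ => (1 : ℂ) := by
  ext k
  rw [PowerSeries.coeff_map, Gs, PowerSeries.coeff_mk, PowerSeries.coeff_mk]
  simp [ind]

lemma map_eval_Gs_ne (r : ℕ) {i j : Fin n} (h : j ≠ i) :
    PowerSeries.map (eval (ind i) : A n →+* ℂ) (Gs n j) = 1 := by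
  ext k
  rw [PowerSeries.coeff_map, Gs, PowerSeries.coeff_mk, PowerSeries.coeff_one]
  cases k with
  | zero => simp
  | succ k => simp [ind, if_neg h, zero_pow]

lemma map_eval_Ps (r : ℕ) (i : Fin n) :
    PowerSeries.map (eval (ind i) : A n →+* ℂ) (Ps n r)
      = PowerSeries.mk fun k => cc n r k := by
  rw [Ps, map_prod, ← Finset.mul_prod_erase _ _ (Finset.mem_univ i), map_eval_Bs_self r i,
    Finset.prod_eq_one fun j hj => map_eval_Bs_ne r (Finset.ne_of_mem_erase hj), mul_one]

lemma eval_jack_self (r : ℕ) (i : Fin n) :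
    eval (ind i) (jackSingular n r i) = - ∑ a ∈ Finset.range (r+1), cc n r a := by
  rw [jack_eq_neg_coeff, map_neg]
  congr 1
  rw [show (eval (ind i)) (PowerSeries.coeff (R := A n) r (seriesFor n r i))
      = PowerSeries.coeff (R := ℂ) r (PowerSeries.map (eval (ind i) : A n →+* ℂ) (seriesFor n r i))
    from (PowerSeries.coeff_map _ _ _).symm]
  rw [seriesFor_eq, map_mul, map_eval_Ps r i, map_eval_Gs_self r i, PowerSeries.coeff_mul]
  rw [Finset.Nat.sum_antidiagonal_eq_sum_range_succ_mk]
  simp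

lemma eval_jack_ne (r : ℕ) {i j : Fin n} (h : j ≠ i) :
    eval (ind i) (jackSingular n r j) = - cc n r r := by
  rw [jack_eq_neg_coeff, map_neg]
  congr 1
  rw [show (eval (ind i)) (PowerSeries.coeff (R := A n) r (seriesFor n r j))
      = PowerSeries.coeff (R := ℂ) r (PowerSeries.map (eval (ind i) : A n →+* ℂ) (seriesFor n r j))
    from (PowerSeries.coeff_map _ _ _).symm]
  rw [seriesFor_eq, map_mul, map_eval_Ps r i, map_eval_Gs_ne r h, mul_one, PowerSeries.coeff_mk]

/-! ### The partial sums of the `cc` are nonzero -/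

lemma TT_formula (r : ℕ) (m : ℕ) :
    ∑ a ∈ Finset.range (m+1), cc n r a
      = (∏ t ∈ Finset.range m, ((r:ℂ)/n - 1 - t)) / m.factorial * (-1)^m := by
  induction m with
  | zero => simp [cc_zero]
  | succ m ih =>
    rw [Finset.sum_range_succ, ih]
    have hprod : ∏ t ∈ Finset.range (m+1), ((r:ℂ)/n - t)
        = ((r:ℂ)/n) * ∏ t ∈ Finset.range m, ((r:ℂ)/n - 1 - t) := by
      rw [Finset.prod_range_succ']
      rw [Finset.prod_congr rfl fun t _ => show ((r:ℂ)/n - (t+1:ℕ)) = ((r:ℂ)/n - 1 - t) by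
        push_cast; ring]
      simp [mul_comm]
    rw [cc, hprod, Finset.prod_range_succ, Nat.factorial_succ]
    have h1 : ((m.factorial : ℂ)) ≠ 0 := Nat.cast_ne_zero.2 m.factorial_ne_zero
    have h3 : ((m : ℂ) + 1) ≠ 0 := Nat.cast_add_one_ne_zero m
    set z : ℂ := (r:ℂ)/(n:ℂ) with hz
    push_cast
    field_simp
    ring

lemma alpha_ne_nat (hn0 : n ≠ 0) (hnd : ¬ (n ∣ r)) (m : ℕ) : ((r:ℂ)/n) ≠ (m:ℂ) := by
  intro h
  apply hnd
  have hn0' : (n:ℂ) ≠ 0 := Nat.cast_ne_zero.mpr hn0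
  have : (r:ℂ) = ((n * m : ℕ) : ℂ) := by
    push_cast
    field_simp at h
    linear_combination h
  exact ⟨m, Nat.cast_injective this⟩

lemma TT_ne_zero (hn0 : n ≠ 0) (hnd : ¬ (n ∣ r)) (m : ℕ) :
    ∑ a ∈ Finset.range (m+1), cc n r a ≠ 0 := by
  rw [TT_formula]
  refine mul_ne_zero (div_ne_zero ?_ (Nat.cast_ne_zero.2 m.factorial_ne_zero))
    (pow_ne_zero _ (by norm_num))
  refine Finset.prod_ne_zero_iff.mpr fun t _ => ?_
  have := alpha_ne_nat (r := r) hn0 hnd (t+1)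
  intro h0
  apply this
  push_cast
  linear_combination h0

lemma jack_ne_zero (r : ℕ) (hn0 : n ≠ 0) (hnd : ¬ (n ∣ r)) (i : Fin n) :
    jackSingular n r i ≠ 0 := by
  intro h0
  have := eval_jack_self (n := n) r i
  rw [h0, map_zero] at this
  exact TT_ne_zero hn0 hnd r (by linear_combination this)

/-! ### The rank of the span -/

def Phi (n : ℕ) : A n →ₗ[ℂ] (Fin n → ℂ) where
  toFun p := fun i => eval (ind i) p
  map_add' p q := by funext i; simp
  map_smul' c p := by funext i; simp [MvPolynomial.smul_eq_C_mul]

lemma finrank_jack (r : ℕ) (hn : 2 ≤ n) (hr : 0 < r) (hnd : ¬ (n ∣ r)) :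
    Module.finrank ℂ (Submodule.span ℂ (Set.range (jackSingular n r))) = n - 1 := by
  have hn0 : n ≠ 0 := by omega
  have hn0' : (n:ℂ) ≠ 0 := Nat.cast_ne_zero.mpr hn0
  set i0 : Fin n := ⟨0, by omega⟩ with hi0
  set c0 : ℂ := ∑ a ∈ Finset.range r, cc n r a with hc0def
  have hc0 : c0 ≠ 0 := by
    have h := TT_ne_zero (r := r) hn0 hnd (r - 1)
    have he : r - 1 + 1 = r := by omega
    rwa [he, ← hc0def] at h
  have hT : ∑ a ∈ Finset.range (r+1), cc n r a = c0 + cc n r r := by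
    rw [Finset.sum_range_succ, hc0def]
  set w : {l : Fin n // l ≠ i0} → A n :=
    fun l => jackSingular n r l - jackSingular n r i0 with hwdef
  have hPhiW : ∀ (l : {l : Fin n // l ≠ i0}) (i : Fin n),
      Phi n (w l) i = (if i = (l : Fin n) then -c0 else 0)
        + (if i = i0 then c0 else 0) := by
    intro l i
    have : Phi n (w l) i = eval (ind i) (jackSingular n r l)
        - eval (ind i) (jackSingular n r i0) := by
      simp [Phi, hwdef]
    rw [this]
    by_cases h1 : i = (l : Fin n)
    · subst h1
      rw [eval_jack_self, eval_jack_ne r (fun h => l.2 h.symm), hT, if_pos rfl, if_neg l.2]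
      ring
    · by_cases h2 : i = i0
      · subst h2
        rw [eval_jack_ne r (fun h => h1 h.symm), eval_jack_self, hT, if_neg h1, if_pos rfl]
        ring
      · rw [eval_jack_ne r (fun h => h1 h.symm), eval_jack_ne r (fun h => h2 h.symm),
          if_neg h1, if_neg h2]
        ring
  have hcomp : LinearIndependent ℂ (fun l : {l : Fin n // l ≠ i0} => Phi n (w l)) := by
    rw [Fintype.linearIndependent_iff]
    intro g hg l
    have hl := congrFun hg (l : Fin n)
    rw [Finset.sum_apply] at hl
    have hterm : ∀ l' : {l : Fin n // l ≠ i0},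
        (g l' • Phi n (w l')) (l : Fin n) = if l = l' then g l' * (-c0) else 0 := by
      intro l'
      rw [Pi.smul_apply, smul_eq_mul, hPhiW l' (l : Fin n), if_neg l.2]
      by_cases h : l = l'
      · subst h; rw [if_pos rfl, if_pos rfl]; ring
      · rw [if_neg (fun hc => h (Subtype.coe_inj.mp hc)), if_neg h]; ring
    rw [Finset.sum_congr rfl fun l' _ => hterm l', Finset.sum_ite_eq,
      if_pos (Finset.mem_univ l)] at hl
    have : g l * (-c0) = 0 := by rw [hl]; simp
    rcases mul_eq_zero.mp this with h | h
    · exact h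
    · exact absurd h (neg_ne_zero.mpr hc0)
  have hw : LinearIndependent ℂ w := LinearIndependent.of_comp (Phi n) hcomp
  set W := Submodule.span ℂ (Set.range (jackSingular n r)) with hW
  have hmemW : ∀ l : {l : Fin n // l ≠ i0}, w l ∈ W := fun l =>
    sub_mem (Submodule.subset_span ⟨l, rfl⟩) (Submodule.subset_span ⟨i0, rfl⟩)
  haveI : FiniteDimensional ℂ W := FiniteDimensional.span_of_finite ℂ (Set.finite_range _)
  have hLI : LinearIndependent ℂ (fun l => (⟨w l, hmemW l⟩ : W)) :=
    LinearIndependent.of_comp W.subtype (by exact hw)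
  have hcard : Fintype.card {l : Fin n // l ≠ i0} ≤ Module.finrank ℂ W :=
    hLI.fintype_card_le_finrank
  have hcardeq : Fintype.card {l : Fin n // l ≠ i0} = n - 1 := by
    have h1 : Fintype.card {l : Fin n // ¬ (l = i0)}
        = Fintype.card (Fin n) - Fintype.card {l : Fin n // l = i0} :=
      Fintype.card_subtype_compl _
    rw [Fintype.card_subtype_eq, Fintype.card_fin] at h1
    exact h1
  -- upper bound
  have hsum0 := sum_jack (n := n) r hn0' hr
  set s : Finset (A n) := (Finset.univ.erase i0).image (jackSingular n r) with hs
  have hspan : W ≤ Submodule.span ℂ (s : Set (A n)) := by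
    rw [hW, Submodule.span_le]
    rintro x ⟨i, rfl⟩
    by_cases h : i = i0
    · subst h
      have hrel : jackSingular n r i0
          = - ∑ l ∈ Finset.univ.erase i0, jackSingular n r l := by
        have h2 := Finset.sum_erase_add Finset.univ (jackSingular n r) (Finset.mem_univ i0)
        linear_combination hsum0 + h2
      rw [hrel]
      exact neg_mem (Submodule.sum_mem _ fun l hl => Submodule.subset_span
        (Finset.mem_coe.mpr (Finset.mem_image_of_mem _ hl)))
    · exact Submodule.subset_span (Finset.mem_coe.mpr
        (Finset.mem_image_of_mem _ (Finset.mem_erase.mpr ⟨h, Finset.mem_univ i⟩)))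
  have hub : Module.finrank ℂ W ≤ n - 1 := by
    calc Module.finrank ℂ W ≤ Module.finrank ℂ (Submodule.span ℂ (s : Set (A n))) :=
          Submodule.finrank_mono hspan
    _ ≤ s.card := finrank_span_finset_le_card s
    _ ≤ (Finset.univ.erase i0).card := Finset.card_image_le
    _ = n - 1 := by
        rw [Finset.card_erase_of_mem (Finset.mem_univ i0), Finset.card_univ, Fintype.card_fin]
  omega

end JackAux

/-- Dunkl's singular vectors in type `A`: for `k = r/n` with `r` a positive integer not
divisible by `n`, the polynomials `f_i = Res_∞ [(z-x_1)⋯(z-x_n)]^{r/n} dz/(z-x_i)` are nonzero,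
homogeneous of degree `r`, sum to zero, are permuted by `S_n` (so they span a copy of the
`(n-1)`-dimensional reflection representation of `S_n`), and are killed by all the Dunkl
operators `D_j`. -/
theorem jack_singular_vectors (n r : ℕ) (hn : 2 ≤ n) (hr : 0 < r) (hnd : ¬ (n ∣ r)) :
    (∀ i, (jackSingular n r i).IsHomogeneous r) ∧
    (∀ i, jackSingular n r i ≠ 0) ∧
    (∑ i, jackSingular n r i = 0) ∧
    (∀ σ : Equiv.Perm (Fin n), ∀ i, rename σ (jackSingular n r i) = jackSingular n r (σ i)) ∧
    (Module.finrank ℂ (Submodule.span ℂ (Set.range (jackSingular n r))) = n - 1) ∧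
    (∀ i j, dunklA ((r : ℂ) / n) j (jackSingular n r i) = 0) := by
  have hn0 : n ≠ 0 := by omega
  have hn0' : (n:ℂ) ≠ 0 := Nat.cast_ne_zero.mpr hn0
  exact ⟨fun i => JackAux.jack_homog r i,
    fun i => JackAux.jack_ne_zero r hn0 hnd i,
    JackAux.sum_jack r hn0' hr,
    fun σ i => JackAux.rename_jack r σ i,
    JackAux.finrank_jack r hn hr hnd,
    fun i j => JackAux.dunkl_zero hn0' hr i j⟩

end
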